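/- Let 0 < δ < δ', let m ≥ 0 and k ≥ 1 be integers, and let y ∈ ℝ. There exists a constant C < ∞ (depending only on δ, δ', m, k) such that: whenever f₁, …, f_N : ℝ → ℂ are smooth functions with all derivatives bounded, which are orthonormal with respect to the inner product ⟨f, g⟩ = Σ_{j=0}^{m+k} ∫_ℝ φ_{δ,y}(x) conj(f^{(j)}(x)) g^{(j)}(x) dx, then Σ_{i=1}^{N} Σ_{j=0}^{m} ∫_ℝ φ_{δ',y}(x) |f_i^{(j)}(x)|² dx ≤ C. In particular, the bound is independent of N. -/

import Mathlib

open Complex MeasureTheory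

/-- The weight function `φ_{δ,y}(x) = exp(−√(1+δ²|x−y|²))` on `ℝ`. -/
noncomputable def phi1 (δ y x : ℝ) : ℝ :=
  Real.exp (-Real.sqrt (1 + δ ^ 2 * |x - y| ^ 2))

/-- The weighted Sobolev inner product
`⟨f,g⟩ = Σ_{j=0}^{m+k} ∫ φ_{δ,y} conj(f^{(j)}) g^{(j)}`. -/
noncomputable def sobolevInner (δ y : ℝ) (mk : ℕ) (f g : ℝ → ℂ) : ℂ :=
  ∑ j ∈ Finset.range (mk + 1),
    ∫ x : ℝ, (phi1 δ y x : ℂ) * (starRingEnd ℂ) (iteratedDeriv j f x) * iteratedDeriv j g x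

section aux

open Set Real

lemma integrable_exp_neg_abs {b : ℝ} (hb : 0 < b) :
    Integrable (fun x : ℝ => Real.exp (-(b * |x|))) := by
  have h1 : IntegrableOn (fun x : ℝ => Real.exp (-(b * |x|))) (Ioi 0) := by
    refine (exp_neg_integrableOn_Ioi 0 hb).congr_fun (fun x hx => ?_) measurableSet_Ioi
    rw [abs_of_pos hx]; ring_nf
  have h2 : IntegrableOn (fun x : ℝ => Real.exp (-(b * |x|))) (Iic 0) := by
    have mp : MeasurePreserving (Neg.neg : ℝ → ℝ)
        (volume.restrict (Neg.neg ⁻¹' (Ioi 0))) (volume.restrict (Ioi 0)) :=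
      (Measure.measurePreserving_neg _).restrict_preimage measurableSet_Ioi
    have := (mp.integrable_comp_emb (Homeomorph.neg ℝ).measurableEmbedding).mpr h1
    have h3 : IntegrableOn (fun x : ℝ => Real.exp (-(b * |x|))) (Iio 0) := by
      have h3' : Integrable (fun x : ℝ => Real.exp (-(b * |x|))) (volume.restrict (Iio 0)) := by
        simpa [Function.comp_def, abs_neg] using this
      exact h3'
    exact (integrableOn_Iic_iff_integrableOn_Iio).mpr h3
  have h4 : IntegrableOn (fun x : ℝ => Real.exp (-(b * |x|))) (Iic 0 ∪ Ioi 0) := h2.union h1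
  rw [← integrableOn_univ, ← Iic_union_Ioi (a := (0:ℝ))]
  exact h4

lemma integrable_exp_neg_abs_sub {b : ℝ} (hb : 0 < b) (y : ℝ) :
    Integrable (fun x : ℝ => Real.exp (-(b * |x - y|))) :=
  (integrable_exp_neg_abs hb).comp_sub_right y

lemma phi1_pos (δ y x : ℝ) : 0 < phi1 δ y x := Real.exp_pos _

lemma sqrt_ge (δ y x : ℝ) (hδ : 0 < δ) :
    δ * |x - y| ≤ Real.sqrt (1 + δ ^ 2 * |x - y| ^ 2) := by
  have h : δ * |x - y| = Real.sqrt (δ ^ 2 * |x - y| ^ 2) := by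
    rw [show δ ^ 2 * |x - y| ^ 2 = (δ * |x - y|) ^ 2 by ring,
      Real.sqrt_sq (by positivity)]
  rw [h]
  apply Real.sqrt_le_sqrt; linarith

lemma sqrt_le (δ y x : ℝ) (hδ : 0 < δ) :
    Real.sqrt (1 + δ ^ 2 * |x - y| ^ 2) ≤ 1 + δ * |x - y| := by
  rw [show (1 : ℝ) + δ ^ 2 * |x - y| ^ 2 = 1 + (δ * |x-y|)^2 by ring]
  have h0 : (0:ℝ) ≤ δ * |x - y| := by positivity
  rw [show (1:ℝ) + δ * |x-y| = Real.sqrt ((1 + δ*|x-y|)^2) by rw [Real.sqrt_sq (by linarith)]]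
  apply Real.sqrt_le_sqrt; nlinarith

lemma phi1_le (δ y x : ℝ) (hδ : 0 < δ) : phi1 δ y x ≤ Real.exp (-(δ * |x - y|)) := by
  exact Real.exp_le_exp.mpr (by simpa using sqrt_ge δ y x hδ)

lemma continuous_phi1 (δ y : ℝ) : Continuous (phi1 δ y) := by
  apply Real.continuous_exp.comp
  apply Continuous.neg
  apply Real.continuous_sqrt.comp
  continuity

lemma integrable_phi1 {δ : ℝ} (hδ : 0 < δ) (y : ℝ) : Integrable (phi1 δ y) := by
  refine (integrable_exp_neg_abs_sub hδ y).mono' ((continuous_phi1 δ y).aestronglyMeasurable) ?_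
  filter_upwards with x
  rw [Real.norm_eq_abs, abs_of_pos (phi1_pos δ y x)]
  exact phi1_le δ y x hδ

/-- Integrability of `phi * conj w * v` for bounded continuous `w v`. -/
lemma integrable_phi_mul {δ : ℝ} (hδ : 0 < δ) (y : ℝ) {w v : ℝ → ℂ} (hw : Continuous w)
    (hv : Continuous v) {Bw Bv : ℝ} (hbw : ∀ x, ‖w x‖ ≤ Bw) (hbv : ∀ x, ‖v x‖ ≤ Bv) :
    Integrable (fun x => (phi1 δ y x : ℂ) * (starRingEnd ℂ) (w x) * v x) := by
  have hBw : 0 ≤ Bw := le_trans (norm_nonneg _) (hbw 0)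
  have hBv : 0 ≤ Bv := le_trans (norm_nonneg _) (hbv 0)
  refine (((integrable_phi1 hδ y).const_mul (Bw * Bv)).mono' ?_ ?_)
  · exact (Complex.continuous_ofReal.comp (continuous_phi1 δ y)).mul
      ((Complex.continuous_conj.comp hw)) |>.mul hv |>.aestronglyMeasurable
  · filter_upwards with x
    have h0 : (0:ℝ) ≤ phi1 δ y x := (phi1_pos δ y x).le
    calc ‖(phi1 δ y x : ℂ) * (starRingEnd ℂ) (w x) * v x‖
        = phi1 δ y x * (‖w x‖ * ‖v x‖) := by
          simp [norm_mul, Complex.norm_real, Real.norm_eq_abs, _root_.abs_of_nonneg h0,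
            RCLike.norm_conj, mul_assoc]
      _ ≤ phi1 δ y x * (Bw * Bv) := by
          apply mul_le_mul_of_nonneg_left _ h0
          exact mul_le_mul (hbw x) (hbv x) (norm_nonneg _) hBw
      _ = Bw * Bv * phi1 δ y x := by ring

lemma integrable_phi_mul_sq {δ : ℝ} (hδ : 0 < δ) (y : ℝ) {w : ℝ → ℂ} (hw : Continuous w)
    {B : ℝ} (hb : ∀ x, ‖w x‖ ≤ B) :
    Integrable (fun x => phi1 δ y x * ‖w x‖ ^ 2) := by
  have hB : 0 ≤ B := le_trans (norm_nonneg _) (hb 0)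
  refine (((integrable_phi1 hδ y).const_mul (B * B)).mono' ?_ ?_)
  · exact ((continuous_phi1 δ y).mul ((hw.norm).pow 2)).aestronglyMeasurable
  · filter_upwards with x
    have h0 : (0:ℝ) ≤ phi1 δ y x := (phi1_pos δ y x).le
    have h1 : ‖w x‖^2 ≤ B * B := by nlinarith [norm_nonneg (w x), hb x]
    rw [Real.norm_eq_abs, _root_.abs_of_nonneg (by positivity)]
    calc phi1 δ y x * ‖w x‖^2 ≤ phi1 δ y x * (B*B) := by nlinarith
      _ = B * B * phi1 δ y x := by ring

lemma norm_sq_eq (z : ℂ) : ‖z‖^2 = z.re^2 + z.im^2 := by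
  rw [Complex.sq_norm, Complex.normSq_apply]; ring

lemma hasDerivAt_norm_sq {h : ℝ → ℂ} (hd : Differentiable ℝ h) (t : ℝ) :
    HasDerivAt (fun s => ‖h s‖^2)
      (2*((h t).re * (deriv h t).re + (h t).im * (deriv h t).im)) t := by
  have hh : HasDerivAt h (deriv h t) t := (hd t).hasDerivAt
  have ha : HasDerivAt (fun s => (h s).re) ((deriv h t).re) t :=
    (Complex.reCLM.hasFDerivAt.comp_hasDerivAt t hh)
  have hb : HasDerivAt (fun s => (h s).im) ((deriv h t).im) t :=
    (Complex.imCLM.hasFDerivAt.comp_hasDerivAt t hh)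
  have := ((ha.mul ha).add (hb.mul hb))
  have heq : (fun s => ‖h s‖^2) = fun s => (h s).re * (h s).re + (h s).im * (h s).im := by
    funext s; rw [norm_sq_eq]; ring
  rw [heq]
  exact this.congr_deriv (by ring)

lemma local_bound {h : ℝ → ℂ} (hd : Differentiable ℝ h) (hc' : Continuous (deriv h)) (x : ℝ) :
    ‖h x‖^2 ≤ 2 * ∫ t in x..(x+1), (‖h t‖^2 + ‖deriv h t‖^2) := by
  set u : ℝ → ℝ := fun t => ‖h t‖^2 with hu_def
  set u' : ℝ → ℝ := fun t => 2*((h t).re * (deriv h t).re + (h t).im * (deriv h t).im) with hu'_def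
  have hu : ∀ t, HasDerivAt u (u' t) t := fun t => hasDerivAt_norm_sq hd t
  have hucont : Continuous u := (hd.continuous.norm.pow 2)
  have hu'cont : Continuous u' := by
    apply Continuous.mul continuous_const
    exact ((Complex.continuous_re.comp hd.continuous).mul
        (Complex.continuous_re.comp hc')).add
      ((Complex.continuous_im.comp hd.continuous).mul (Complex.continuous_im.comp hc'))
  have hvcont : Continuous (fun t => ‖h t‖^2 + ‖deriv h t‖^2) :=
    (hd.continuous.norm.pow 2).add (hc'.norm.pow 2)
  have hbound : ∀ t, |u' t| ≤ ‖h t‖^2 + ‖deriv h t‖^2 := by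
    intro t
    rw [norm_sq_eq (h t), norm_sq_eq (deriv h t), hu'_def]
    set a := (h t).re; set a' := (deriv h t).re; set b := (h t).im; set b' := (deriv h t).im
    rw [abs_le]
    constructor
    · beta_reduce; nlinarith [sq_nonneg (a + a'), sq_nonneg (b + b')]
    · beta_reduce; nlinarith [sq_nonneg (a - a'), sq_nonneg (b - b')]
  set A := ∫ t in x..(x+1), |u' t| with hA
  have step1 : ∀ t ∈ Icc x (x+1), u x ≤ u t + A := by
    intro t ht
    have ftc : ∫ s in x..t, u' s = u t - u x :=
      intervalIntegral.integral_eq_sub_of_hasDerivAt (fun s _ => hu s)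
        (hu'cont.intervalIntegrable x t)
    have h1 : |∫ s in x..t, u' s| ≤ ∫ s in x..t, |u' s| := by
      rw [← Real.norm_eq_abs]
      refine (intervalIntegral.norm_integral_le_integral_norm ht.1)
    have h2 : ∫ s in x..t, |u' s| ≤ A := by
      rw [hA]
      apply intervalIntegral.integral_mono_interval (le_refl x) ht.1 ht.2
      · filter_upwards with s using abs_nonneg _
      · exact (hu'cont.abs).intervalIntegrable _ _
    have : u x - u t ≤ A := by
      calc u x - u t = -(∫ s in x..t, u' s) := by rw [ftc]; ring
        _ ≤ |∫ s in x..t, u' s| := neg_le_abs _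
        _ ≤ A := h1.trans h2
    linarith
  have step2 : u x ≤ (∫ t in x..(x+1), u t) + A := by
    have hconst : u x = ∫ t in x..(x+1), u x := by
      simp
    rw [hconst]
    have : (∫ t in x..(x+1), u t) + A = ∫ t in x..(x+1), (u t + A) := by
      rw [intervalIntegral.integral_add (hucont.intervalIntegrable _ _)
        (intervalIntegrable_const)]
      simp
    rw [this]
    apply intervalIntegral.integral_mono_on (by linarith)
      (intervalIntegrable_const) ((hucont.intervalIntegrable _ _).add intervalIntegrable_const)
    exact step1
  have step3 : A ≤ ∫ t in x..(x+1), (‖h t‖^2 + ‖deriv h t‖^2) := by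
    apply intervalIntegral.integral_mono_on (by linarith)
      ((hu'cont.abs).intervalIntegrable _ _) (hvcont.intervalIntegrable _ _)
    intro t _; exact hbound t
  have step4 : (∫ t in x..(x+1), u t) ≤ ∫ t in x..(x+1), (‖h t‖^2 + ‖deriv h t‖^2) := by
    apply intervalIntegral.integral_mono_on (by linarith)
      (hucont.intervalIntegrable _ _) (hvcont.intervalIntegrable _ _)
    intro t _
    have := sq_nonneg ‖deriv h t‖
    simp only [hu_def]; nlinarith
  calc ‖h x‖^2 = u x := rfl
    _ ≤ (∫ t in x..(x+1), u t) + A := step2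
    _ ≤ 2 * ∫ t in x..(x+1), (‖h t‖^2 + ‖deriv h t‖^2) := by linarith

lemma phi1_lower {δ y : ℝ} (hδ : 0 < δ) {x t : ℝ} (ht : |t - x| ≤ 1) :
    Real.exp (-(δ + Real.sqrt (1 + δ^2*|x-y|^2))) ≤ phi1 δ y t := by
  rw [phi1]
  apply Real.exp_le_exp.mpr
  rw [neg_le_neg_iff]
  set S := Real.sqrt (1 + δ^2*|x-y|^2) with hS
  have hS0 : 0 ≤ S := Real.sqrt_nonneg _
  have hS2 : S^2 = 1 + δ^2*|x-y|^2 := Real.sq_sqrt (by positivity)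
  have hS1 : δ * |x - y| ≤ S := sqrt_ge δ y x hδ
  have htri : |t - y| ≤ |x - y| + 1 := by
    calc |t - y| = |(t - x) + (x - y)| := by ring_nf
      _ ≤ |t - x| + |x - y| := abs_add_le _ _
      _ ≤ |x - y| + 1 := by linarith
  calc Real.sqrt (1 + δ^2*|t-y|^2) ≤ Real.sqrt ((S + δ)^2) := by
        apply Real.sqrt_le_sqrt
        have h2 : |t-y|^2 ≤ (|x-y|+1)^2 := by nlinarith [abs_nonneg (t-y)]
        nlinarith [mul_le_mul_of_nonneg_left hS1 hδ.le,
          mul_le_mul_of_nonneg_left h2 (sq_nonneg δ)]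
    _ = S + δ := Real.sqrt_sq (by linarith)
    _ = δ + S := by ring

lemma weighted_bound {δ : ℝ} (hδ : 0 < δ) (y : ℝ) {h : ℝ → ℂ}
    (hd : Differentiable ℝ h) (hc' : Continuous (deriv h))
    {B B' : ℝ} (hB : ∀ t, ‖h t‖ ≤ B) (hB' : ∀ t, ‖deriv h t‖ ≤ B') (x : ℝ) :
    ‖h x‖^2 ≤ 2 * Real.exp (δ + Real.sqrt (1 + δ^2*|x-y|^2)) *
      ((∫ t, phi1 δ y t * ‖h t‖^2) + ∫ t, phi1 δ y t * ‖deriv h t‖^2) := by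
  set E := Real.exp (δ + Real.sqrt (1 + δ^2*|x-y|^2)) with hE
  have hE0 : 0 < E := Real.exp_pos _
  have hEinv : Real.exp (-(δ + Real.sqrt (1 + δ^2*|x-y|^2))) = E⁻¹ := by
    rw [hE, ← Real.exp_neg]
  have hvcont : Continuous (fun t => ‖h t‖^2 + ‖deriv h t‖^2) :=
    (hd.continuous.norm.pow 2).add (hc'.norm.pow 2)
  have hwcont : Continuous (fun t => phi1 δ y t * (‖h t‖^2 + ‖deriv h t‖^2)) :=
    (continuous_phi1 δ y).mul hvcont
  have key1 : (∫ t in x..(x+1), (‖h t‖^2 + ‖deriv h t‖^2)) ≤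
      E * ∫ t in x..(x+1), phi1 δ y t * (‖h t‖^2 + ‖deriv h t‖^2) := by
    rw [← intervalIntegral.integral_const_mul]
    apply intervalIntegral.integral_mono_on (by linarith)
      (hvcont.intervalIntegrable _ _) ((continuous_const.mul hwcont).intervalIntegrable _ _)
    intro t htmem
    have habs : |t - x| ≤ 1 := by
      rw [abs_le]; constructor <;> [linarith [htmem.1]; linarith [htmem.2]]
    have hphi : E⁻¹ ≤ phi1 δ y t := by rw [← hEinv]; exact phi1_lower hδ habs
    have h1 : 1 ≤ E * phi1 δ y t := by
      rw [← mul_inv_cancel₀ (ne_of_gt hE0)]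
      exact mul_le_mul_of_nonneg_left hphi hE0.le
    have h2 : 0 ≤ ‖h t‖^2 + ‖deriv h t‖^2 := by positivity
    calc ‖h t‖^2 + ‖deriv h t‖^2 = 1 * (‖h t‖^2 + ‖deriv h t‖^2) := by ring
      _ ≤ (E * phi1 δ y t) * (‖h t‖^2 + ‖deriv h t‖^2) := by
          exact mul_le_mul_of_nonneg_right h1 h2
      _ = E * (phi1 δ y t * (‖h t‖^2 + ‖deriv h t‖^2)) := by ring
  have hint1 : Integrable (fun t => phi1 δ y t * ‖h t‖^2) := integrable_phi_mul_sq hδ y hd.continuous hB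
  have hint2 : Integrable (fun t => phi1 δ y t * ‖deriv h t‖^2) := integrable_phi_mul_sq hδ y hc' hB'
  have key2 : (∫ t in x..(x+1), phi1 δ y t * (‖h t‖^2 + ‖deriv h t‖^2)) ≤
      (∫ t, phi1 δ y t * ‖h t‖^2) + ∫ t, phi1 δ y t * ‖deriv h t‖^2 := by
    rw [intervalIntegral.integral_of_le (by linarith)]
    have heq : ∀ t, phi1 δ y t * (‖h t‖^2 + ‖deriv h t‖^2)
        = phi1 δ y t * ‖h t‖^2 + phi1 δ y t * ‖deriv h t‖^2 := fun t => by ring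
    simp_rw [heq]
    rw [← integral_add hint1 hint2]
    apply setIntegral_le_integral (hint1.add hint2)
    filter_upwards with t
    have h1 := (phi1_pos δ y t).le
    exact add_nonneg (mul_nonneg h1 (sq_nonneg _)) (mul_nonneg h1 (sq_nonneg _))
  have h0 := local_bound hd hc' x
  calc ‖h x‖^2 ≤ 2 * ∫ t in x..(x+1), (‖h t‖^2 + ‖deriv h t‖^2) := h0
    _ ≤ 2 * (E * ∫ t in x..(x+1), phi1 δ y t * (‖h t‖^2 + ‖deriv h t‖^2)) := by linarith
    _ ≤ 2 * E * ((∫ t, phi1 δ y t * ‖h t‖^2) + ∫ t, phi1 δ y t * ‖deriv h t‖^2) := by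
        rw [mul_assoc]
        apply mul_le_mul_of_nonneg_left _ (by norm_num)
        exact mul_le_mul_of_nonneg_left key2 hE0.le

section algebra
variable {N : ℕ} (c : Fin N → ℂ) (f : Fin N → ℝ → ℂ)

lemma iteratedDeriv_lincomb (hf : ∀ i, ContDiff ℝ (⊤ : ℕ∞) (f i)) (n : ℕ) (x : ℝ) :
    iteratedDeriv n (fun t => ∑ i, c i • f i t) x = ∑ i, c i • iteratedDeriv n (f i) x := by
  have h1 : ∀ i : Fin N, ContDiff ℝ (n : ℕ∞) (fun t => c i • f i t) :=
    fun i => (ContDiff.const_smul (c i) ((hf i).of_le (by exact_mod_cast le_top)))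
  simp only [iteratedDeriv_eq_iteratedFDeriv]
  rw [iteratedFDeriv_sum (fun i _ => h1 i)]
  simp only [Finset.sum_apply, ContinuousMultilinearMap.sum_apply]
  congr 1
  funext i
  have h2 : iteratedFDeriv ℝ n (c i • f i) x
      = c i • iteratedFDeriv ℝ n (f i) x := iteratedFDeriv_const_smul_apply ((hf i).of_le (by exact_mod_cast le_top)).contDiffAt
  rw [show (fun t => c i • f i t) = c i • f i from rfl, h2]; rfl

lemma lincomb_contDiff (hf : ∀ i, ContDiff ℝ (⊤ : ℕ∞) (f i)) :
    ContDiff ℝ (⊤ : ℕ∞) (fun t => ∑ i, c i • f i t) :=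
  ContDiff.sum (fun i _ => (hf i).const_smul (c i))

lemma lincomb_deriv_bound (hf : ∀ i, ContDiff ℝ (⊤ : ℕ∞) (f i))
    (hbd : ∀ i, ∀ n : ℕ, ∃ B : ℝ, ∀ x : ℝ, ‖iteratedDeriv n (f i) x‖ ≤ B) (n : ℕ) :
    ∃ B : ℝ, ∀ x : ℝ, ‖iteratedDeriv n (fun t => ∑ i, c i • f i t) x‖ ≤ B := by
  choose B hB using fun i => hbd i n
  refine ⟨∑ i, ‖c i‖ * B i, fun x => ?_⟩
  rw [iteratedDeriv_lincomb c f hf n x]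
  calc ‖∑ i, c i • iteratedDeriv n (f i) x‖ ≤ ∑ i, ‖c i • iteratedDeriv n (f i) x‖ :=
        norm_sum_le _ _
    _ ≤ ∑ i, ‖c i‖ * B i := by
        apply Finset.sum_le_sum
        intro i _
        rw [norm_smul]
        exact mul_le_mul_of_nonneg_left (hB i x) (norm_nonneg _)

lemma sobolevInner_lincomb {δ y : ℝ} (hδ : 0 < δ) (mk : ℕ)
    (hf : ∀ i, ContDiff ℝ (⊤ : ℕ∞) (f i))
    (hbd : ∀ i, ∀ n : ℕ, ∃ B : ℝ, ∀ x : ℝ, ‖iteratedDeriv n (f i) x‖ ≤ B) :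
    sobolevInner δ y mk (fun t => ∑ i, c i • f i t) (fun t => ∑ i, c i • f i t)
      = ∑ i, ∑ i', (starRingEnd ℂ) (c i) * c i' * sobolevInner δ y mk (f i) (f i') := by
  choose B hB using hbd
  have hcont : ∀ i n, Continuous (iteratedDeriv n (f i)) :=
    fun i n => (hf i).continuous_iteratedDeriv n (by exact_mod_cast le_top)
  have hint : ∀ (j : ℕ) (i i' : Fin N), Integrable (fun x =>
      (phi1 δ y x : ℂ) * (starRingEnd ℂ) (iteratedDeriv j (f i) x) * iteratedDeriv j (f i') x) :=
    fun j i i' => integrable_phi_mul hδ y (hcont i j) (hcont i' j) (hB i j) (hB i' j)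
  unfold sobolevInner
  have key : ∀ j : ℕ,
      (∫ x : ℝ, (phi1 δ y x : ℂ) *
          (starRingEnd ℂ) (iteratedDeriv j (fun t => ∑ i, c i • f i t) x) *
          iteratedDeriv j (fun t => ∑ i, c i • f i t) x)
        = ∑ i, ∑ i', (starRingEnd ℂ) (c i) * c i' *
            ∫ x : ℝ, (phi1 δ y x : ℂ) * (starRingEnd ℂ) (iteratedDeriv j (f i) x) *
              iteratedDeriv j (f i') x := by
    intro j
    have hptwise : ∀ x : ℝ,
        (phi1 δ y x : ℂ) * (starRingEnd ℂ) (iteratedDeriv j (fun t => ∑ i, c i • f i t) x) *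
          iteratedDeriv j (fun t => ∑ i, c i • f i t) x
        = ∑ i, ∑ i', (starRingEnd ℂ) (c i) * c i' *
            ((phi1 δ y x : ℂ) * (starRingEnd ℂ) (iteratedDeriv j (f i) x) *
              iteratedDeriv j (f i') x) := by
      intro x
      rw [iteratedDeriv_lincomb c f hf j x]
      simp only [map_sum, smul_eq_mul, map_mul, Finset.mul_sum, Finset.sum_mul]
      rw [Finset.sum_comm]
      refine Finset.sum_congr rfl fun i _ => Finset.sum_congr rfl fun i' _ => by ring
    simp_rw [hptwise]
    rw [integral_finset_sum _ (fun i _ => by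
      apply integrable_finset_sum
      intro i' _
      exact (hint j i i').const_mul _)]
    apply Finset.sum_congr rfl
    intro i _
    rw [integral_finset_sum _ (fun i' _ => (hint j i i').const_mul _)]
    apply Finset.sum_congr rfl
    intro i' _
    exact integral_const_mul _ _
  simp_rw [key]
  rw [Finset.sum_comm]
  apply Finset.sum_congr rfl
  intro i _
  rw [Finset.sum_comm]
  apply Finset.sum_congr rfl
  intro i' _
  rw [Finset.mul_sum]
end algebra

lemma sobolevInner_self_real (δ y : ℝ) (mk : ℕ) (g : ℝ → ℂ) :
    sobolevInner δ y mk g g =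
      ((∑ j ∈ Finset.range (mk+1), ∫ x : ℝ, phi1 δ y x * ‖iteratedDeriv j g x‖^2 : ℝ) : ℂ) := by
  unfold sobolevInner
  rw [Complex.ofReal_sum]
  apply Finset.sum_congr rfl
  intro j _
  have hpt : ∀ x : ℝ, (phi1 δ y x : ℂ) * (starRingEnd ℂ) (iteratedDeriv j g x) *
      iteratedDeriv j g x = ((phi1 δ y x * ‖iteratedDeriv j g x‖^2 : ℝ) : ℂ) := by
    intro x
    rw [mul_assoc, show (starRingEnd ℂ) (iteratedDeriv j g x) * iteratedDeriv j g x
        = ((‖iteratedDeriv j g x‖^2 : ℝ) : ℂ) by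
      rw [mul_comm, Complex.mul_conj, Complex.sq_norm]]
    push_cast
    ring
  simp_rw [hpt]
  exact integral_ofReal

end aux

open Set Real in
/-- Hilbert–Schmidt property of the embedding `H^{m+k}(δ,y) ↪ H^{m}(δ',y)` (`δ < δ'`):
there is `C` such that any finite orthonormal family for the `H^{m+k}(δ,y)` inner
product satisfies `Σ_i Σ_{j≤m} ∫ φ_{δ',y} |f_i^{(j)}|² ≤ C`, uniformly in its size. -/
theorem sobolev_embedding_hilbert_schmidt (δ δ' : ℝ) (hδ : 0 < δ) (hδδ' : δ < δ')
    (m k : ℕ) (hk : 1 ≤ k) (y : ℝ) :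
    ∃ C : ℝ, ∀ N : ℕ, ∀ f : Fin N → ℝ → ℂ,
      (∀ i, ContDiff ℝ (⊤ : ℕ∞) (f i)) →
      (∀ i, ∀ n : ℕ, ∃ B : ℝ, ∀ x : ℝ, ‖iteratedDeriv n (f i) x‖ ≤ B) →
      (∀ i j : Fin N, sobolevInner δ y (m + k) (f i) (f j) =
        if i = j then (1 : ℂ) else 0) →
      (∑ i : Fin N, ∑ j ∈ Finset.range (m + 1),
        ∫ x : ℝ, phi1 δ' y x * ‖iteratedDeriv j (f i) x‖ ^ 2) ≤ C := by
  refine ⟨(m+1) * (2 * Real.exp (δ+1) * ∫ x : ℝ, Real.exp (-((δ'-δ) * |x-y|))), ?_⟩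
  intro N f hsm hbd horm
  have hδ' : 0 < δ' := lt_trans hδ hδδ'
  have hcont : ∀ (i : Fin N) (n : ℕ), Continuous (iteratedDeriv n (f i)) :=
    fun i n => (hsm i).continuous_iteratedDeriv n (by exact_mod_cast le_top)
  -- pointwise Bessel bound
  have pointwise : ∀ j, j ≤ m → ∀ x : ℝ,
      (∑ i, ‖iteratedDeriv j (f i) x‖^2) ≤
        2 * Real.exp (δ + Real.sqrt (1 + δ^2*|x-y|^2)) := by
    intro j hj x
    set c : Fin N → ℂ := fun i => (starRingEnd ℂ) (iteratedDeriv j (f i) x) with hc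
    set g : ℝ → ℂ := fun t => ∑ i, c i • f i t with hg
    set S : ℝ := ∑ i, ‖iteratedDeriv j (f i) x‖^2 with hSdef
    have hS0 : 0 ≤ S := Finset.sum_nonneg (fun i _ => sq_nonneg _)
    have hgsm : ContDiff ℝ (⊤ : ℕ∞) g := lincomb_contDiff c f hsm
    obtain ⟨B, hB⟩ := lincomb_deriv_bound c f hsm hbd j
    obtain ⟨B', hB'⟩ := lincomb_deriv_bound c f hsm hbd (j+1)
    set h : ℝ → ℂ := iteratedDeriv j g with hh
    have hderiv : deriv h = iteratedDeriv (j+1) g := (iteratedDeriv_succ).symm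
    have hd : Differentiable ℝ h :=
      hgsm.differentiable_iteratedDeriv j (by exact_mod_cast lt_top_iff_ne_top.mpr (by simp))
    have hc' : Continuous (deriv h) := by
      rw [hderiv]; exact hgsm.continuous_iteratedDeriv (j+1) (by exact_mod_cast le_top)
    have hB'2 : ∀ t, ‖deriv h t‖ ≤ B' := by rw [hderiv]; exact hB'
    have wb := weighted_bound hδ y hd hc' hB hB'2 x
    set E := Real.exp (δ + Real.sqrt (1 + δ^2*|x-y|^2)) with hE
    have hE0 : 0 < E := Real.exp_pos _
    set T : ℕ → ℝ := fun l => ∫ t, phi1 δ y t * ‖iteratedDeriv l g t‖^2 with hT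
    have hTnonneg : ∀ l, 0 ≤ T l := by
      intro l
      apply integral_nonneg
      intro t
      exact mul_nonneg (phi1_pos δ y t).le (sq_nonneg _)
    have wb2 : ‖h x‖^2 ≤ 2 * E * (T j + T (j+1)) := by
      have : (∫ t, phi1 δ y t * ‖deriv h t‖^2) = T (j+1) := by rw [hderiv]
      rw [← this]
      exact wb
    -- sum of T over range equals S
    have hsum : (∑ l ∈ Finset.range (m+k+1), T l) = S := by
      have e1 := sobolevInner_self_real δ y (m+k) g
      have e2 := sobolevInner_lincomb c f (y := y) hδ (m+k) hsm hbd
      rw [← hg] at e2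
      rw [e2] at e1
      have e3 : ∑ i, ∑ i', (starRingEnd ℂ) (c i) * c i' * sobolevInner δ y (m+k) (f i) (f i')
          = ((S : ℝ) : ℂ) := by
        rw [hSdef]
        push_cast
        apply Finset.sum_congr rfl
        intro i _
        rw [Finset.sum_eq_single i]
        · rw [horm i i, if_pos rfl, mul_one, hc]
          rw [show ((starRingEnd ℂ) ((starRingEnd ℂ) (iteratedDeriv j (f i) x))) *
              (starRingEnd ℂ) (iteratedDeriv j (f i) x)
              = (starRingEnd ℂ) (iteratedDeriv j (f i) x) * iteratedDeriv j (f i) x by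
            rw [Complex.conj_conj]; ring]
          rw [mul_comm, Complex.mul_conj, Complex.normSq_eq_norm_sq]
          push_cast
          ring
        · intro i' _ hne
          rw [horm i i', if_neg (Ne.symm hne), mul_zero]
        · intro hni; exact absurd (Finset.mem_univ i) hni
      rw [e3] at e1
      simp only [hT]
      exact (Complex.ofReal_injective e1).symm
    have hpair : T j + T (j+1) ≤ ∑ l ∈ Finset.range (m+k+1), T l := by
      have hne : j ≠ j+1 := (Nat.succ_ne_self j).symm
      have hsub : ({j, j+1} : Finset ℕ) ⊆ Finset.range (m+k+1) := by
        intro l hl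
        simp only [Finset.mem_insert, Finset.mem_singleton] at hl
        rcases hl with rfl | rfl <;> · rw [Finset.mem_range]; omega
      calc T j + T (j+1) = ∑ l ∈ ({j, j+1} : Finset ℕ), T l := (Finset.sum_pair hne).symm
        _ ≤ ∑ l ∈ Finset.range (m+k+1), T l :=
            Finset.sum_le_sum_of_subset_of_nonneg hsub (fun l _ _ => hTnonneg l)
    have hhx : h x = (S : ℂ) := by
      rw [hh, hg, iteratedDeriv_lincomb c f hsm j x, hSdef]
      push_cast
      apply Finset.sum_congr rfl
      intro i _
      rw [hc, smul_eq_mul, mul_comm, Complex.mul_conj, Complex.normSq_eq_norm_sq]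
      push_cast
      ring
    have hnx : ‖h x‖^2 = S^2 := by
      rw [hhx, Complex.norm_real, Real.norm_eq_abs, _root_.abs_of_nonneg hS0]
    -- conclude S ≤ 2E
    have final : S^2 ≤ 2 * E * S := by
      calc S^2 = ‖h x‖^2 := hnx.symm
        _ ≤ 2 * E * (T j + T (j+1)) := wb2
        _ ≤ 2 * E * S := by
            rw [← hsum]
            exact mul_le_mul_of_nonneg_left hpair (by positivity)
    by_contra hcon
    push_neg at hcon
    nlinarith
  -- final assembly
  have hbb : 0 < δ' - δ := by linarith
  rw [Finset.sum_comm]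
  have hstep : ∀ j ∈ Finset.range (m+1),
      (∑ i : Fin N, ∫ x : ℝ, phi1 δ' y x * ‖iteratedDeriv j (f i) x‖ ^ 2)
        ≤ 2 * Real.exp (δ+1) * ∫ x : ℝ, Real.exp (-((δ'-δ) * |x-y|)) := by
    intro j hj
    have hjm : j ≤ m := by rw [Finset.mem_range] at hj; omega
    choose Bf hBf using fun i => hbd i j
    have hint : ∀ i : Fin N, Integrable (fun x => phi1 δ' y x * ‖iteratedDeriv j (f i) x‖^2) :=
      fun i => integrable_phi_mul_sq hδ' y (hcont i j) (hBf i)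
    rw [← integral_finset_sum _ (fun i _ => hint i)]
    have hrhs : Integrable (fun x : ℝ => 2 * Real.exp (δ+1) * Real.exp (-((δ'-δ) * |x-y|))) :=
      (integrable_exp_neg_abs_sub hbb y).const_mul _
    rw [show (2 * Real.exp (δ+1) * ∫ x : ℝ, Real.exp (-((δ'-δ) * |x-y|)))
        = ∫ x : ℝ, 2 * Real.exp (δ+1) * Real.exp (-((δ'-δ) * |x-y|)) by
      rw [integral_const_mul]]
    apply integral_mono (integrable_finset_sum _ (fun i _ => hint i)) hrhs
    intro x
    have hphi0 : 0 ≤ phi1 δ' y x := (phi1_pos δ' y x).le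
    calc (∑ i, phi1 δ' y x * ‖iteratedDeriv j (f i) x‖^2)
        = phi1 δ' y x * ∑ i, ‖iteratedDeriv j (f i) x‖^2 := by rw [Finset.mul_sum]
      _ ≤ phi1 δ' y x * (2 * Real.exp (δ + Real.sqrt (1 + δ^2*|x-y|^2))) :=
          mul_le_mul_of_nonneg_left (pointwise j hjm x) hphi0
      _ ≤ 2 * Real.exp (δ+1) * Real.exp (-((δ'-δ) * |x-y|)) := by
          rw [phi1]
          have h1 := sqrt_le δ y x hδ
          have h2 := sqrt_ge δ' y x hδ'
          have hle : -Real.sqrt (1 + δ'^2*|x-y|^2) + (δ + Real.sqrt (1 + δ^2*|x-y|^2))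
              ≤ (δ + 1) + (-((δ'-δ) * |x-y|)) := by nlinarith
          calc Real.exp (-Real.sqrt (1 + δ'^2*|x-y|^2)) *
                (2 * Real.exp (δ + Real.sqrt (1 + δ^2*|x-y|^2)))
              = 2 * Real.exp (-Real.sqrt (1 + δ'^2*|x-y|^2) +
                  (δ + Real.sqrt (1 + δ^2*|x-y|^2))) := by simp only [Real.exp_add]; ring
            _ ≤ 2 * Real.exp ((δ + 1) + (-((δ'-δ) * |x-y|))) := by
                have := Real.exp_le_exp.mpr hle; linarith
            _ = 2 * Real.exp (δ+1) * Real.exp (-((δ'-δ) * |x-y|)) := by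
                rw [Real.exp_add]; ring
  calc (∑ j ∈ Finset.range (m+1), ∑ i : Fin N,
        ∫ x : ℝ, phi1 δ' y x * ‖iteratedDeriv j (f i) x‖ ^ 2)
      ≤ ∑ j ∈ Finset.range (m+1), (2 * Real.exp (δ+1) * ∫ x : ℝ, Real.exp (-((δ'-δ) * |x-y|))) :=
        Finset.sum_le_sum hstep
    _ = (m+1) * (2 * Real.exp (δ+1) * ∫ x : ℝ, Real.exp (-((δ'-δ) * |x-y|))) := by
        rw [Finset.sum_const, Finset.card_range, nsmul_eq_mul]
        push_cast
        ring
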